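/- arXiv:2605.29439 — 3 statements merged into one kernel-verified Lean document; each statement's English description precedes it below -/
import Mathlib

section
/- Let G be a finite abelian group and H ≤ G a subgroup with |H[2]| ≤ 4 (where H[2] is the 2-torsion of G intersected with H). If k ≥ 2 is even and |H| ≥ k + 6, then Σ_k(H) = H, i.e., every element of H is a sum of k distinct elements of H. -/
/-- The `k`-sumset of a subset `S` of an abelian group: all sums of `k`
distinct elements of `S`. -/
def sumset {G : Type*} [AddCommGroup G] (k : ℕ) (S : Set G) : Set G :=
  {g | ∃ A : Finset G, ↑A ⊆ S ∧ A.card = k ∧ ∑ a ∈ A, a = g}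

private lemma exists_zero_sum_subset {G : Type*} [AddCommGroup G] [DecidableEq G]
    (n : ℕ) : ∀ (T : Finset G), (∀ a ∈ T, -a ∈ T) → (∀ a ∈ T, a ≠ -a) →
    2 * n ≤ T.card →
    ∃ A : Finset G, A ⊆ T ∧ A.card = 2 * n ∧ ∑ a ∈ A, a = 0 := by
  induction n with
  | zero => intro T _ _ _; exact ⟨∅, by simp⟩
  | succ n ih =>
    intro T hneg hself hcard
    have hpos : 0 < T.card := by omega
    obtain ⟨a, ha⟩ := Finset.card_pos.mp hpos
    have hna : -a ∈ T := hneg a ha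
    have hane : a ≠ -a := hself a ha
    set T' : Finset G := T \ {a, -a} with hT'
    have hsub : ({a, -a} : Finset G) ⊆ T := by
      intro x hx
      simp only [Finset.mem_insert, Finset.mem_singleton] at hx
      rcases hx with rfl | rfl <;> assumption
    have hpaircard : ({a, -a} : Finset G).card = 2 := by
      rw [Finset.card_insert_of_notMem (by simpa using hane), Finset.card_singleton]
    have hT'card : T'.card = T.card - 2 := by
      rw [hT', Finset.card_sdiff_of_subset hsub, hpaircard]
    have hneg' : ∀ b ∈ T', -b ∈ T' := by
      intro b hb
      rw [hT', Finset.mem_sdiff] at hb ⊢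
      refine ⟨hneg b hb.1, ?_⟩
      simp only [Finset.mem_insert, Finset.mem_singleton] at hb ⊢
      push_neg at hb ⊢
      exact ⟨fun hba => hb.2.2 (neg_eq_iff_eq_neg.mp hba),
        fun hba => hb.2.1 (neg_injective hba)⟩
    have hself' : ∀ b ∈ T', b ≠ -b := fun b hb =>
      hself b (Finset.mem_sdiff.mp hb).1
    obtain ⟨A', hA'sub, hA'card, hA'sum⟩ := ih T' hneg' hself' (by omega)
    have haA' : a ∉ A' := fun h => by
      have := hA'sub h; rw [hT', Finset.mem_sdiff] at this; simp at this
    have hnaA' : -a ∉ A' := fun h => by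
      have := hA'sub h; rw [hT', Finset.mem_sdiff] at this; simp at this
    refine ⟨insert a (insert (-a) A'), ?_, ?_, ?_⟩
    · intro x hx
      simp only [Finset.mem_insert] at hx
      rcases hx with rfl | rfl | hx
      · exact ha
      · exact hna
      · exact (Finset.mem_sdiff.mp (hA'sub hx)).1
    · rw [Finset.card_insert_of_notMem, Finset.card_insert_of_notMem hnaA',
        hA'card]
      · ring
      · simp only [Finset.mem_insert]
        push_neg
        exact ⟨hane, haA'⟩
    · rw [Finset.sum_insert, Finset.sum_insert hnaA', hA'sum]
      · abel
      · simp only [Finset.mem_insert]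
        push_neg
        exact ⟨hane, haA'⟩

/-- If `|G[2]| ≤ 4`, `k ≥ 2` is even and `H` is a subgroup with
`|H| ≥ k + 6`, then every element of `H` is a sum of `k` distinct
elements of `H`, i.e. `Σ_k(H) = H`. -/
theorem sumset_subgroup_eq (G : Type*) [AddCommGroup G] [Fintype G]
    (h2 : Nat.card {g : G // g + g = 0} ≤ 4)
    (H : AddSubgroup G) (k : ℕ) (hk2 : 2 ≤ k) (hke : Even k)
    (hcard : k + 6 ≤ Nat.card H) :
    sumset k (H : Set G) = (H : Set G) := by
  classical
  ext h
  constructor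
  · rintro ⟨A, hAsub, hAcard, rfl⟩
    exact AddSubgroup.sum_mem H (fun a ha => hAsub ha)
  · intro hh
    -- construct the witness
    set Hfin : Finset G := (H : Set G).toFinset with hHfin
    have hHcard : Hfin.card = Nat.card H := by
      rw [hHfin, Set.toFinset_card, Nat.card_eq_fintype_card]
      rfl
    set T : Finset G := Hfin.filter (fun a => a + a ≠ 0 ∧ a ≠ h ∧ a ≠ -h) with hT
    -- bound on elements removed
    have htors : (Hfin.filter (fun a => a + a = 0)).card ≤ 4 := by
      calc (Hfin.filter (fun a => a + a = 0)).card
          ≤ (Finset.univ.filter (fun a : G => a + a = 0)).card :=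
            Finset.card_le_card (Finset.filter_subset_filter _ (Finset.subset_univ _))
        _ = Fintype.card {g : G // g + g = 0} := (Fintype.card_subtype _).symm
        _ = Nat.card {g : G // g + g = 0} := (Nat.card_eq_fintype_card).symm
        _ ≤ 4 := h2
    have hTcard : k ≤ T.card := by
      have hcompl : Hfin.filter (fun a => ¬(a + a ≠ 0 ∧ a ≠ h ∧ a ≠ -h)) ⊆
          (Hfin.filter (fun a => a + a = 0)) ∪ {h, -h} := by
        intro x hx
        rw [Finset.mem_filter] at hx
        push_neg at hx
        simp only [Finset.mem_union, Finset.mem_filter, Finset.mem_insert,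
          Finset.mem_singleton]
        by_cases h1 : x + x = 0
        · exact Or.inl ⟨hx.1, h1⟩
        · by_cases h2' : x = h
          · exact Or.inr (Or.inl h2')
          · exact Or.inr (Or.inr (hx.2 h1 h2'))
      have hcomplcard : (Hfin.filter (fun a => ¬(a + a ≠ 0 ∧ a ≠ h ∧ a ≠ -h))).card ≤ 6 := by
        calc (Hfin.filter (fun a => ¬(a + a ≠ 0 ∧ a ≠ h ∧ a ≠ -h))).card
            ≤ ((Hfin.filter (fun a => a + a = 0)) ∪ {h, -h}).card :=
              Finset.card_le_card hcompl
          _ ≤ (Hfin.filter (fun a => a + a = 0)).card + ({h, -h} : Finset G).card :=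
              Finset.card_union_le _ _
          _ ≤ 4 + 2 := by
              have : ({h, -h} : Finset G).card ≤ 2 := Finset.card_insert_le _ _ |>.trans (by simp)
              omega
      have hsplit := Finset.card_filter_add_card_filter_not
        (s := Hfin) (p := fun a => a + a ≠ 0 ∧ a ≠ h ∧ a ≠ -h)
      have hTe : T.card = (Hfin.filter (fun a => a + a ≠ 0 ∧ a ≠ h ∧ a ≠ -h)).card := by
        rw [hT]
      omega
    have hneg : ∀ a ∈ T, -a ∈ T := by
      intro a ha
      rw [hT, Finset.mem_filter] at ha ⊢
      obtain ⟨haH, h1, h2', h3⟩ := ha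
      refine ⟨?_, ?_, ?_, ?_⟩
      · rw [hHfin, Set.mem_toFinset] at haH ⊢; exact neg_mem haH
      · intro hc; apply h1; rw [← neg_add, neg_eq_zero] at hc; exact hc
      · intro hc; apply h3; rw [← hc, neg_neg]
      · intro hc; apply h2'; rw [← neg_neg a, hc, neg_neg]
    have hself : ∀ a ∈ T, a ≠ -a := by
      intro a ha hc
      rw [hT, Finset.mem_filter] at ha
      exact ha.2.1 (by nth_rewrite 2 [hc]; simp)
    have h0T : (0 : G) ∉ T := by
      rw [hT, Finset.mem_filter]; push_neg; intro _; intro hc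
      exact absurd (by simp) hc
    have hhT : h ∉ T := by
      rw [hT, Finset.mem_filter]; push_neg; intro _ _ hc
      exact absurd rfl hc
    by_cases hh0 : h = 0
    · -- h = 0 : take k elements in pairs
      obtain ⟨n, hn⟩ := hke
      obtain ⟨A, hAsub, hAcard, hAsum⟩ := exists_zero_sum_subset n T hneg hself
        (by omega)
      refine ⟨A, ?_, by omega, by rw [hAsum, hh0]⟩
      intro x hx
      have := Finset.mem_filter.mp (hAsub hx)
      rw [hHfin, Set.mem_toFinset] at this
      exact this.1
    · -- h ≠ 0 : take {h, 0} plus (k-2)/2 pairs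
      have hk2e : Even (k - 2) := by
        obtain ⟨n, hn⟩ := hke; exact ⟨n - 1, by omega⟩
      obtain ⟨n, hn⟩ := hk2e
      obtain ⟨A, hAsub, hAcard, hAsum⟩ := exists_zero_sum_subset n T hneg hself
        (by omega)
      have h0A : (0 : G) ∉ A := fun hc => h0T (hAsub hc)
      have hhA : h ∉ A := fun hc => hhT (hAsub hc)
      refine ⟨insert h (insert 0 A), ?_, ?_, ?_⟩
      · intro x hx
        simp only [Finset.coe_insert, Set.mem_insert_iff] at hx
        rcases hx with rfl | rfl | hx
        · exact hh
        · exact zero_mem H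
        · have := Finset.mem_filter.mp (hAsub hx)
          rw [hHfin, Set.mem_toFinset] at this
          exact this.1
      · rw [Finset.card_insert_of_notMem, Finset.card_insert_of_notMem h0A,
          hAcard]
        · omega
        · simp only [Finset.mem_insert]
          push_neg
          exact ⟨hh0, hhA⟩
      · rw [Finset.sum_insert, Finset.sum_insert h0A, hAsum]
        · simp
        · simp only [Finset.mem_insert]
          push_neg
          exact ⟨hh0, hhA⟩
end

section
/- Let G be a finite abelian group, H ≤ G a subgroup of index 2, u ∉ H, and k an even positive integer with Σ_k(H) = H. Then Σ_k(u + H) = H. -/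
/-- If `H` has index 2, `u ∉ H`, `k` is even and `Σ_k(H) = H`, then
`Σ_k(u + H) = H`. -/
theorem sumset_coset_eq (G : Type*) [AddCommGroup G] [Fintype G]
    (H : AddSubgroup G) (hH : H.index = 2) (u : G) (hu : u ∉ H)
    (k : ℕ) (hk : 0 < k) (hke : Even k)
    (hsum : sumset k (H : Set G) = (H : Set G)) :
    sumset k ((fun h => u + h) '' (H : Set G)) = (H : Set G) := by
  classical
  -- k • u ∈ H since 2 • u ∈ H (index 2) and k is even
  have h2u : u + u ∈ H := by
    have hdvd := addOrderOf_dvd_natCard (QuotientAddGroup.mk u : G ⧸ H)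
    have hcard : Nat.card (G ⧸ H) = 2 := hH
    rw [hcard] at hdvd
    have h2 : 2 • (QuotientAddGroup.mk u : G ⧸ H) = 0 :=
      addOrderOf_dvd_iff_nsmul_eq_zero.mp hdvd
    have : (QuotientAddGroup.mk (u + u) : G ⧸ H) = 0 := by
      rw [QuotientAddGroup.mk_add, ← two_nsmul]
      exact h2
    exact (QuotientAddGroup.eq_zero_iff _).mp this
  obtain ⟨m, hm⟩ := hke
  have hku : k • u ∈ H := by
    have : k • u = m • (u + u) := by
      rw [hm, smul_add, add_nsmul]
    rw [this]
    exact AddSubgroup.nsmul_mem H h2u m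
  ext g
  constructor
  · rintro ⟨A, hA, hAcard, hAsum⟩
    have hmem : ∀ a ∈ A, a - u ∈ H := by
      intro a ha
      obtain ⟨h, hh, rfl⟩ := hA ha
      simpa using hh
    have hsum' : ∑ a ∈ A, (a - u) ∈ H := AddSubgroup.sum_mem H hmem
    have : ∑ a ∈ A, (a - u) = g - k • u := by
      rw [Finset.sum_sub_distrib, hAsum, Finset.sum_const, hAcard]
    rw [this] at hsum'
    have := H.add_mem hsum' hku
    simpa using this
  · intro hg
    have hgk : g - k • u ∈ (H : Set G) := H.sub_mem hg hku
    rw [← hsum] at hgk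
    obtain ⟨B, hB, hBcard, hBsum⟩ := hgk
    refine ⟨B.image (fun b => u + b), ?_, ?_, ?_⟩
    · intro x hx
      simp only [Finset.coe_image, Set.mem_image] at hx
      obtain ⟨b, hb, rfl⟩ := hx
      exact ⟨b, hB hb, rfl⟩
    · rw [Finset.card_image_of_injective _ (add_right_injective u), hBcard]
    · rw [Finset.sum_image (by intros a _ b _ h; exact add_left_cancel h)]
      rw [Finset.sum_add_distrib, hBsum, Finset.sum_const, hBcard]
      abel
end

section
/- Let s ≥ 1 and p > 1 be integers, and r ≥ 1. Then gcd(p^r + 1, p^s − 1) equals 1 if s/gcd(r,s) is odd and p is even; equals 2 if s/gcd(r,s) is odd and p is odd; and equals p^{gcd(r,s)} + 1 if s/gcd(r,s) is even. -/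
/-!
Write `d = gcd r s`, `a = p ^ d`, `r = d m` and `s = d n` with `m`, `n` coprime, and let `x` be the
image of `a` modulo `g = gcd (a ^ m + 1) (a ^ n - 1)`. Then `x ^ m = -1` and `x ^ n = 1`, so
`x ^ (2 m) = 1` and hence `x ^ gcd (2 m) n = x ^ gcd 2 n = 1`; in particular `x ^ 2 = 1`.
If `n` is odd this gives `x = x ^ n = 1`, so `2 = 0` modulo `g`, and the parity of `a` decides
between `1` and `2`. If `n` is even then `m` is odd, so `x = x ^ m = -1`, i.e. `g ∣ a + 1`, while
`a + 1` divides both `a ^ m + 1` and `a ^ n - 1` because `a ≡ -1 [MOD a + 1]`.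
-/

section Monoid

variable {M : Type*} [Monoid M] {x : M}

theorem pow_eq_self_of_sq_eq_one (hx : x ^ 2 = 1) {k : ℕ} (hk : Odd k) : x ^ k = x := by
  obtain ⟨j, rfl⟩ := hk
  rw [pow_succ, pow_mul, hx, one_pow, one_mul]

variable [HasDistribNeg M] {m n : ℕ}

theorem sq_eq_one_of_pow_eq_neg_one_of_pow_eq_one (hmn : m.Coprime n) (hm : x ^ m = -1)
    (hn : x ^ n = 1) : x ^ 2 = 1 := by
  have h2m : x ^ (2 * m) = 1 := by rw [pow_mul', hm, neg_one_sq]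
  have hgcd : x ^ Nat.gcd 2 n = 1 := by
    rw [← hmn.gcd_mul_right_cancel 2]
    exact pow_gcd_eq_one.mpr ⟨h2m, hn⟩
  obtain ⟨k, hk⟩ := Nat.gcd_dvd_left 2 n
  rw [hk, pow_mul, hgcd, one_pow]

theorem eq_neg_one_of_pow_eq_neg_one_of_pow_eq_one (hmn : m.Coprime n) (hm : x ^ m = -1)
    (hn : x ^ n = 1) (hm_odd : Odd m) : x = -1 :=
  have hx := sq_eq_one_of_pow_eq_neg_one_of_pow_eq_one hmn hm hn
  (pow_eq_self_of_sq_eq_one hx hm_odd).symm.trans hm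

end Monoid

theorem two_eq_zero_of_pow_eq_neg_one_of_pow_eq_one {R : Type*} [Ring R] {x : R} {m n : ℕ}
    (hmn : m.Coprime n) (hm : x ^ m = -1) (hn : x ^ n = 1) (hn_odd : Odd n) : (2 : R) = 0 := by
  have hx2 := sq_eq_one_of_pow_eq_neg_one_of_pow_eq_one hmn hm hn
  have hx : x = 1 := (pow_eq_self_of_sq_eq_one hx2 hn_odd).symm.trans hn
  rw [hx, one_pow] at hm
  rw [← one_add_one_eq_two]
  nth_rewrite 2 [hm]
  exact add_neg_cancel 1

namespace Nat

theorem dvd_pow_add_one_iff {g a m : ℕ} : g ∣ a ^ m + 1 ↔ (a : ZMod g) ^ m = -1 := by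
  rw [← ZMod.natCast_eq_zero_iff, eq_neg_iff_add_eq_zero, Nat.cast_add, Nat.cast_pow,
    Nat.cast_one]

theorem dvd_pow_sub_one_iff {g a n : ℕ} (ha : 0 < a) :
    g ∣ a ^ n - 1 ↔ (a : ZMod g) ^ n = 1 := by
  rw [← ZMod.natCast_eq_zero_iff, Nat.cast_sub (Nat.one_le_pow _ _ ha), Nat.cast_pow,
    Nat.cast_one, sub_eq_zero]

variable {a m n : ℕ}

theorem gcd_pow_add_one_pow_sub_one_dvd_two (ha : 0 < a) (hmn : m.Coprime n) (hn : Odd n) :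
    gcd (a ^ m + 1) (a ^ n - 1) ∣ 2 := by
  have h := two_eq_zero_of_pow_eq_neg_one_of_pow_eq_one hmn
    (dvd_pow_add_one_iff.mp (gcd_dvd_left _ _)) ((dvd_pow_sub_one_iff ha).mp (gcd_dvd_right _ _))
    hn
  exact (ZMod.natCast_eq_zero_iff 2 _).mp (by exact_mod_cast h)

theorem gcd_pow_add_one_pow_sub_one_of_odd_of_even (ha : 0 < a) (hmn : m.Coprime n) (hn : Odd n)
    (ha_even : Even a) : gcd (a ^ m + 1) (a ^ n - 1) = 1 := by
  rcases (Nat.dvd_prime Nat.prime_two).mp (gcd_pow_add_one_pow_sub_one_dvd_two ha hmn hn) with h | h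
  · exact h
  · have h2 : 2 ∣ a ^ n - 1 := h ▸ gcd_dvd_right _ _
    obtain ⟨k, hk⟩ := ha_even.pow_of_ne_zero hn.pos.ne'
    have hpos : 0 < a ^ n := Nat.pow_pos ha
    omega

theorem gcd_pow_add_one_pow_sub_one_of_odd_of_odd (hmn : m.Coprime n) (hn : Odd n)
    (ha_odd : Odd a) : gcd (a ^ m + 1) (a ^ n - 1) = 2 := by
  refine dvd_antisymm (gcd_pow_add_one_pow_sub_one_dvd_two ha_odd.pos hmn hn) (dvd_gcd ?_ ?_)
  · exact (ha_odd.pow.add_one).two_dvd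
  · exact (Nat.Odd.sub_odd ha_odd.pow odd_one).two_dvd

theorem gcd_pow_add_one_pow_sub_one_of_even (ha : 0 < a) (hmn : m.Coprime n) (hn : Even n) :
    gcd (a ^ m + 1) (a ^ n - 1) = a + 1 := by
  have hm : Odd m := (hmn.coprime_dvd_right hn.two_dvd).odd_of_right
  apply dvd_antisymm
  · have hx := eq_neg_one_of_pow_eq_neg_one_of_pow_eq_one hmn
      (dvd_pow_add_one_iff.mp (gcd_dvd_left _ _))
      ((dvd_pow_sub_one_iff ha).mp (gcd_dvd_right _ _)) hm
    rw [← ZMod.natCast_eq_zero_iff]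
    push_cast
    rw [hx, neg_add_cancel]
  · have hx : (a : ZMod (a + 1)) = -1 :=
      eq_neg_of_add_eq_zero_left (by exact_mod_cast ZMod.natCast_self (a + 1))
    exact dvd_gcd (dvd_pow_add_one_iff.mpr (by rw [hx, hm.neg_one_pow]))
      ((dvd_pow_sub_one_iff ha).mpr (by rw [hx, hn.neg_one_pow]))

end Nat

theorem gcd_pow_add_one_pow_sub_one_general (p r s : ℕ) (hp : 1 < p) (hs : 1 ≤ s) :
    (Odd (s / Nat.gcd r s) → Even p → Nat.gcd (p ^ r + 1) (p ^ s - 1) = 1) ∧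
    (Odd (s / Nat.gcd r s) → Odd p → Nat.gcd (p ^ r + 1) (p ^ s - 1) = 2) ∧
    (Even (s / Nat.gcd r s) → Nat.gcd (p ^ r + 1) (p ^ s - 1) = p ^ Nat.gcd r s + 1) := by
  set d := Nat.gcd r s
  have hd : 0 < d := Nat.gcd_pos_of_pos_right r hs
  have ha : 0 < p ^ d := by positivity
  have hmn : (r / d).Coprime (s / d) := Nat.coprime_div_gcd_div_gcd hd
  have hpow : ∀ k, d ∣ k → p ^ k = (p ^ d) ^ (k / d) := fun k hk => by
    rw [← pow_mul, Nat.mul_div_cancel' hk]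
  rw [hpow r (Nat.gcd_dvd_left r s), hpow s (Nat.gcd_dvd_right r s)]
  exact ⟨fun hn hp_even => Nat.gcd_pow_add_one_pow_sub_one_of_odd_of_even ha hmn hn
      (hp_even.pow_of_ne_zero hd.ne'),
    fun hn hp_odd => Nat.gcd_pow_add_one_pow_sub_one_of_odd_of_odd hmn hn hp_odd.pow,
    Nat.gcd_pow_add_one_pow_sub_one_of_even ha hmn⟩

/-- For integers `p > 1`, `r, s ≥ 1`: `gcd(p^r + 1, p^s - 1)` equals `1` if
`s / gcd(r,s)` is odd and `p` even, `2` if `s / gcd(r,s)` is odd and `p` odd,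
and `p^{gcd(r,s)} + 1` if `s / gcd(r,s)` is even. -/
theorem gcd_pow_add_one_pow_sub_one (p r s : ℕ) (hp : 1 < p) (hr : 1 ≤ r) (hs : 1 ≤ s) :
    (Odd (s / Nat.gcd r s) → Even p → Nat.gcd (p ^ r + 1) (p ^ s - 1) = 1) ∧
    (Odd (s / Nat.gcd r s) → Odd p → Nat.gcd (p ^ r + 1) (p ^ s - 1) = 2) ∧
    (Even (s / Nat.gcd r s) → Nat.gcd (p ^ r + 1) (p ^ s - 1) = p ^ Nat.gcd r s + 1) :=
  gcd_pow_add_one_pow_sub_one_general p r s hp hs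
end
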